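/- Let n be a positive integer, σ > 0, and let X_1,…,X_n be independent Gaussian random variables with X_i having mean μ_i and variance 1; set λ = ∑_{i=1}^n μ_i². Then the detection error probability satisfies E[Q(√(∑_{i=1}^n X_i²)/(2σ))] ≤ (1 + 1/(4σ²))^{−n/2} · exp(−λ/(8σ² + 2)). -/

import Mathlib

open Real MeasureTheory ProbabilityTheory
open scoped ENNReal NNReal

/-- The Gaussian Q-function: upper-tail probability of the standard normal distribution. -/
noncomputable def gaussQ (x : ℝ) : ℝ :=
  ∫ t in Set.Ioi x, (Real.sqrt (2 * Real.pi))⁻¹ * Real.exp (-t ^ 2 / 2)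

lemma integral_exp_quadratic {b : ℝ} (hb : 0 < b) (c d : ℝ) :
    ∫ x : ℝ, Real.exp (-b * x ^ 2 + c * x + d)
      = Real.sqrt (π / b) * Real.exp (d + c ^ 2 / (4 * b)) := by
  have h : ∀ x : ℝ, -b * x ^ 2 + c * x + d
      = -b * (x - c / (2 * b)) ^ 2 + (d + c ^ 2 / (4 * b)) := by
    intro x; field_simp; ring
  simp_rw [h, Real.exp_add, integral_mul_const]
  rw [integral_sub_right_eq_self (fun x : ℝ => Real.exp (-b * x ^ 2)) (c / (2 * b)),
    integral_gaussian]

lemma integrable_gauss_kernel (a : ℝ) :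
    Integrable (fun t : ℝ => (Real.sqrt (2 * Real.pi))⁻¹ * Real.exp (-(t - a) ^ 2 / 2)) := by
  have h := ((integrable_exp_neg_mul_sq (by norm_num : (0:ℝ) < 1/2)).comp_sub_right
    a).const_mul (Real.sqrt (2 * Real.pi))⁻¹
  refine h.congr (Filter.Eventually.of_forall fun t => ?_)
  ring_nf

lemma integral_gauss_kernel (a : ℝ) :
    ∫ t : ℝ, (Real.sqrt (2 * Real.pi))⁻¹ * Real.exp (-(t - a) ^ 2 / 2) = 1 := by
  have h : ∀ t : ℝ, (Real.sqrt (2 * Real.pi))⁻¹ * Real.exp (-(t - a) ^ 2 / 2)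
      = (Real.sqrt (2 * Real.pi))⁻¹ * Real.exp (-(1/2) * (t - a) ^ 2) := by
    intro t; ring_nf
  simp_rw [h]
  rw [integral_const_mul, integral_sub_right_eq_self (fun x : ℝ => Real.exp (-(1/2) * x ^ 2)) a,
    integral_gaussian]
  rw [inv_mul_eq_one₀ (by positivity)]
  rw [show π / (1/2) = 2 * π by ring]

lemma gaussQ_nonneg (x : ℝ) : 0 ≤ gaussQ x :=
  setIntegral_nonneg measurableSet_Ioi fun t _ => by positivity

lemma gaussQ_le {x : ℝ} (hx : 0 ≤ x) : gaussQ x ≤ Real.exp (-x ^ 2 / 2) := by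
  have key : ∀ t ∈ Set.Ioi x, (Real.sqrt (2 * Real.pi))⁻¹ * Real.exp (-t ^ 2 / 2)
      ≤ Real.exp (-x ^ 2 / 2) * ((Real.sqrt (2 * Real.pi))⁻¹ * Real.exp (-(t - x) ^ 2 / 2)) := by
    intro t ht
    rw [Set.mem_Ioi] at ht
    rw [show Real.exp (-x ^ 2 / 2) * ((Real.sqrt (2 * Real.pi))⁻¹ * Real.exp (-(t - x) ^ 2 / 2))
      = (Real.sqrt (2 * Real.pi))⁻¹ * (Real.exp (-x ^ 2 / 2) * Real.exp (-(t - x) ^ 2 / 2)) by ring,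
      ← Real.exp_add]
    refine mul_le_mul_of_nonneg_left (Real.exp_le_exp.mpr ?_) (by positivity)
    nlinarith
  calc gaussQ x ≤ ∫ t in Set.Ioi x,
        Real.exp (-x ^ 2 / 2) * ((Real.sqrt (2 * Real.pi))⁻¹ * Real.exp (-(t - x) ^ 2 / 2)) := by
        refine setIntegral_mono_on ?_ ?_ measurableSet_Ioi key
        · exact (integrable_gauss_kernel 0).integrableOn.congr_fun
            (fun t _ => by ring_nf) measurableSet_Ioi
        · exact ((integrable_gauss_kernel x).const_mul _).integrableOn
    _ ≤ ∫ t : ℝ, Real.exp (-x ^ 2 / 2) *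
          ((Real.sqrt (2 * Real.pi))⁻¹ * Real.exp (-(t - x) ^ 2 / 2)) := by
        refine setIntegral_le_integral ((integrable_gauss_kernel x).const_mul _) ?_
        exact Filter.Eventually.of_forall fun t => by positivity
    _ = Real.exp (-x ^ 2 / 2) := by
        rw [integral_const_mul, integral_gauss_kernel, mul_one]

lemma integral_exp_mul_sq_gaussianReal {t : ℝ} (ht : t < 1/2) (m : ℝ) :
    ∫ x, Real.exp (t * x ^ 2) ∂(gaussianReal m 1)
      = (1 - 2 * t) ^ (-(1:ℝ)/2) * Real.exp (t * m ^ 2 / (1 - 2 * t)) := by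
  have hb : 0 < 1/2 - t := by linarith
  rw [gaussianReal_of_var_ne_zero _ one_ne_zero]
  have hmeas : Measurable fun x => (gaussianPDFReal m 1 x).toNNReal :=
    (measurable_gaussianPDFReal m 1).real_toNNReal
  have hd : gaussianPDF m 1 = fun x => ((gaussianPDFReal m 1 x).toNNReal : ℝ≥0∞) := rfl
  rw [hd, integral_withDensity_eq_integral_smul hmeas]
  have heq : ∀ x : ℝ, (gaussianPDFReal m 1 x).toNNReal • Real.exp (t * x ^ 2)
      = (Real.sqrt (2 * π))⁻¹ * Real.exp (-(1/2 - t) * x ^ 2 + m * x + (-(m ^ 2) / 2)) := by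
    intro x
    rw [NNReal.smul_def, Real.coe_toNNReal _ (gaussianPDFReal_nonneg m 1 x)]
    simp only [gaussianPDFReal, NNReal.coe_one, mul_one]
    rw [smul_eq_mul, mul_assoc, ← Real.exp_add]
    congr 1
    ring
  simp_rw [heq]
  rw [integral_const_mul, integral_exp_quadratic hb]
  have h1 : (Real.sqrt (2 * π))⁻¹ * Real.sqrt (π / (1/2 - t)) = (1 - 2 * t) ^ (-(1:ℝ)/2) := by
    rw [← Real.sqrt_inv, ← Real.sqrt_mul (by positivity)]
    have hne : (1:ℝ) - 2 * t ≠ 0 := by linarith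
    rw [show (2 * π)⁻¹ * (π / (1/2 - t)) = (1 - 2 * t)⁻¹ by
      have hπ : π ≠ 0 := pi_ne_zero
      field_simp]
    rw [Real.sqrt_inv, show (-(1:ℝ)/2) = -(1/2 : ℝ) by norm_num,
      Real.rpow_neg (by linarith), ← Real.sqrt_eq_rpow]
  have hne : (1:ℝ) - 2 * t ≠ 0 := by linarith
  have h2 : -(m ^ 2) / 2 + m ^ 2 / (4 * (1/2 - t)) = t * m ^ 2 / (1 - 2 * t) := by
    field_simp
    ring
  rw [h2, ← mul_assoc, h1]

/-- Detection error bound for noncentral chi-squared transmitted power: if `X_1,…,X_n` are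
independent Gaussians with unit variance and means `μ_i`, and `λ = ∑ μ_i²`, then
`E[Q(√(∑ X_i²)/(2σ))] ≤ (1+1/(4σ²))^{−n/2}·exp(−λ/(8σ²+2))`. -/
theorem noncentral_chiSq_detection_error_bound
    {Ω : Type*} [MeasurableSpace Ω] (μ : Measure Ω) [IsProbabilityMeasure μ]
    (n : ℕ) (hn : 0 < n) (σ : ℝ) (hσ : 0 < σ)
    (m : Fin n → ℝ) (X : Fin n → Ω → ℝ) (hmeas : ∀ i, Measurable (X i))
    (hindep : iIndepFun X μ)
    (hX : ∀ i, Measure.map (X i) μ = gaussianReal (m i) 1) :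
    ∫ ω, gaussQ (Real.sqrt (∑ i, X i ω ^ 2) / (2 * σ)) ∂μ
      ≤ (1 + 1 / (4 * σ ^ 2)) ^ (-(n : ℝ) / 2)
        * Real.exp (-(∑ i, m i ^ 2) / (8 * σ ^ 2 + 2)) := by
  have hσ2 : (0:ℝ) < σ ^ 2 := by positivity
  set t : ℝ := -(1 / (8 * σ ^ 2)) with ht_def
  have ht_neg : t < 0 := by
    rw [ht_def]; simp; positivity
  have ht : t < 1/2 := ht_neg.trans (by norm_num)
  have h1mt : 1 - 2 * t = 1 + 1 / (4 * σ ^ 2) := by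
    rw [ht_def]; field_simp; ring
  -- the squared variables
  set Y : Fin n → Ω → ℝ := fun i => (fun x : ℝ => x ^ 2) ∘ X i with hY_def
  have hYmeas : ∀ i, Measurable (Y i) := fun i => (measurable_id.pow_const 2).comp (hmeas i)
  have hYindep : iIndepFun Y μ :=
    hindep.comp _ fun i => measurable_id.pow_const 2
  have hSmeas : Measurable fun ω => ∑ i, X i ω ^ 2 :=
    Finset.measurable_sum _ fun i _ => (hmeas i).pow_const 2
  -- mgf of each squared Gaussian
  have hmgf : ∀ i, mgf (Y i) μ t
      = (1 + 1 / (4 * σ ^ 2)) ^ (-(1:ℝ)/2) * Real.exp (-(m i) ^ 2 / (8 * σ ^ 2 + 2)) := by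
    intro i
    have hg : AEStronglyMeasurable (fun x : ℝ => Real.exp (t * x ^ 2)) (Measure.map (X i) μ) :=
      ((measurable_id.pow_const 2).const_mul t).exp.aestronglyMeasurable
    have : mgf (Y i) μ t = ∫ x, Real.exp (t * x ^ 2) ∂(Measure.map (X i) μ) := by
      rw [integral_map (hmeas i).aemeasurable hg]; rfl
    rw [this, hX i, integral_exp_mul_sq_gaussianReal ht, h1mt]
    congr 1
    rw [ht_def]
    have h8 : (8:ℝ) * σ ^ 2 + 2 ≠ 0 := by positivity
    congr 1
    field_simp
    ring
  -- step 1: pointwise bound and monotonicity of the integral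
  have step1 : ∫ ω, gaussQ (Real.sqrt (∑ i, X i ω ^ 2) / (2 * σ)) ∂μ
      ≤ ∫ ω, Real.exp (t * ∑ i, X i ω ^ 2) ∂μ := by
    refine integral_mono_of_nonneg
      (Filter.Eventually.of_forall fun ω => gaussQ_nonneg _) ?_
      (Filter.Eventually.of_forall fun ω => ?_)
    · refine Integrable.mono' (integrable_const 1)
        ((hSmeas.const_mul t).exp.aestronglyMeasurable)
        (Filter.Eventually.of_forall fun ω => ?_)
      rw [Real.norm_eq_abs, abs_of_pos (Real.exp_pos _), Real.exp_le_one_iff]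
      have hS : (0:ℝ) ≤ ∑ i, X i ω ^ 2 := Finset.sum_nonneg fun i _ => sq_nonneg _
      exact mul_nonpos_of_nonpos_of_nonneg ht_neg.le hS
    · have hS : (0:ℝ) ≤ ∑ i, X i ω ^ 2 := Finset.sum_nonneg fun i _ => sq_nonneg _
      have hx : 0 ≤ Real.sqrt (∑ i, X i ω ^ 2) / (2 * σ) := by positivity
      refine (gaussQ_le hx).trans_eq ?_
      congr 1
      rw [div_pow, Real.sq_sqrt hS, ht_def]
      have : ((2:ℝ) * σ) ^ 2 = 4 * σ ^ 2 := by ring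
      rw [this]
      field_simp
      ring
  -- step 2: independence factorizes the expectation
  have step2 : ∫ ω, Real.exp (t * ∑ i, X i ω ^ 2) ∂μ = ∏ i, mgf (Y i) μ t := by
    rw [← hYindep.mgf_sum hYmeas Finset.univ]
    simp only [mgf]
    congr 1
    ext ω
    simp [hY_def, Finset.sum_apply]
  refine (step1.trans_eq step2).trans (le_of_eq ?_)
  -- step 3: evaluate the product
  calc ∏ i, mgf (Y i) μ t
      = ∏ i : Fin n, ((1 + 1 / (4 * σ ^ 2)) ^ (-(1:ℝ)/2)
          * Real.exp (-(m i) ^ 2 / (8 * σ ^ 2 + 2))) := Finset.prod_congr rfl fun i _ => hmgf i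
    _ = (1 + 1 / (4 * σ ^ 2)) ^ (-(n:ℝ)/2)
          * Real.exp (-(∑ i, m i ^ 2) / (8 * σ ^ 2 + 2)) := by
        rw [Finset.prod_mul_distrib, Finset.prod_const, ← Real.exp_sum]
        congr 1
        · rw [Finset.card_univ, Fintype.card_fin, ← Real.rpow_natCast
            ((1 + 1 / (4 * σ ^ 2)) ^ (-(1:ℝ)/2)) n, ← Real.rpow_mul (by positivity)]
          congr 1
          ring
        · congr 1
          rw [← Finset.sum_div, ← Finset.sum_neg_distrib]
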